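/- arXiv:2402.17755 — 7 statements merged into one kernel-verified Lean document; each statement's English description precedes it below -/
import Mathlib

section
/- Let p be a prime number. For every integer n ≥ 1, the ℤ_p-submodule of ℚ_p generated by the elements p^m/m! for all integers m ≥ n is equal to p^{[n]}·ℤ_p. (In other words, the ideal (p^{[n]}) ⊆ ℤ_p is the n-th divided power of the ideal (p) ⊆ ℤ_p.) -/
/-!
Inside `ℚ_[p]`, an element `x` lies in the `ℤ_[p]`-span of a nonzero `y` exactly when `x / y`
is a `p`-adic integer, i.e. when `v_p(y) ≤ v_p(x)`. The generator `p^m / m!` has valuation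
`m - v_p(m!)`, so every generator lies in the span of `p^[n]`, and conversely `p^[n]` lies in the
span of a generator `p^m / m!` at which the minimum `[n]` is attained.
-/

namespace Padic

variable {p : ℕ} [Fact p.Prime]

theorem mem_span_singleton_of_valuation_le {x y : ℚ_[p]} (hx : x ≠ 0) (hy : y ≠ 0)
    (h : y.valuation ≤ x.valuation) : x ∈ Submodule.span ℤ_[p] {y} := by
  have hquot : ‖x / y‖ ≤ 1 := by
    rw [norm_le_one_iff_val_nonneg, div_eq_mul_inv, valuation_mul hx (inv_ne_zero hy),
      valuation_inv]
    omega
  refine Submodule.mem_span_singleton.mpr ⟨⟨x / y, hquot⟩, ?_⟩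
  exact div_mul_cancel₀ x hy

theorem valuation_p_zpow (L : ℤ) : ((p : ℚ_[p]) ^ L).valuation = L := by
  rw [valuation_zpow, valuation_p, mul_one]

theorem p_pow_div_factorial_ne_zero (m : ℕ) : (p : ℚ_[p]) ^ m / (m.factorial : ℚ_[p]) ≠ 0 :=
  div_ne_zero (pow_ne_zero _ (Nat.cast_ne_zero.mpr (Fact.out : p.Prime).ne_zero))
    (Nat.cast_ne_zero.mpr m.factorial_ne_zero)

theorem valuation_p_pow_div_factorial (m : ℕ) :
    ((p : ℚ_[p]) ^ m / (m.factorial : ℚ_[p])).valuation = m - padicValNat p m.factorial := by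
  have hp0 : (p : ℚ_[p]) ≠ 0 := Nat.cast_ne_zero.mpr (Fact.out : p.Prime).ne_zero
  have hfact : (m.factorial : ℚ_[p]) ≠ 0 := Nat.cast_ne_zero.mpr m.factorial_ne_zero
  rw [div_eq_mul_inv, valuation_mul (pow_ne_zero _ hp0) (inv_ne_zero hfact),
    valuation_inv, valuation_pow, valuation_p, valuation_natCast]
  ring

end Padic

open Padic in
theorem stmt_3_general (p : ℕ) [hp : Fact p.Prime] (n : ℕ) (L : ℤ)
    (hL : IsLeast {v : ℤ | ∃ m : ℕ, n ≤ m ∧ v = (m : ℤ) - padicValNat p (Nat.factorial m)} L) :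
    Submodule.span ℤ_[p]
        {x : ℚ_[p] | ∃ m : ℕ, n ≤ m ∧ x = (p : ℚ_[p]) ^ m / (Nat.factorial m : ℚ_[p])} =
      Submodule.span ℤ_[p] {(p : ℚ_[p]) ^ L} := by
  have hpL : (p : ℚ_[p]) ^ L ≠ 0 := zpow_ne_zero _ (Nat.cast_ne_zero.mpr hp.out.ne_zero)
  apply le_antisymm
  · rw [Submodule.span_le]
    rintro _ ⟨m, hm, rfl⟩
    refine mem_span_singleton_of_valuation_le (p_pow_div_factorial_ne_zero m) hpL ?_
    rw [valuation_p_zpow, valuation_p_pow_div_factorial]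
    exact hL.2 ⟨m, hm, rfl⟩
  · obtain ⟨m, hm, hLm⟩ := hL.1
    have hgen : (p : ℚ_[p]) ^ m / (m.factorial : ℚ_[p]) ∈ Submodule.span ℤ_[p]
        {x : ℚ_[p] | ∃ m : ℕ, n ≤ m ∧ x = (p : ℚ_[p]) ^ m / (Nat.factorial m : ℚ_[p])} :=
      Submodule.subset_span ⟨m, hm, rfl⟩
    have hpL_mem : (p : ℚ_[p]) ^ L ∈
        Submodule.span ℤ_[p] {(p : ℚ_[p]) ^ m / (m.factorial : ℚ_[p])} := by
      refine mem_span_singleton_of_valuation_le hpL (p_pow_div_factorial_ne_zero m) ?_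
      rw [valuation_p_zpow, valuation_p_pow_div_factorial, hLm]
    rw [Submodule.span_singleton_le_iff_mem]
    exact Submodule.span_le.mpr (Set.singleton_subset_iff.mpr hgen) hpL_mem

/-- Let `p` be a prime. For every integer `n ≥ 1`, the
`ℤ_p`-submodule of `ℚ_p` generated by the elements `p^m/m!` for all `m ≥ n`
equals `p^{[n]}·ℤ_p`, where `[n]` is the Mazur number of `n` (the least element
of `{m − v_p(m!) : m ≥ n}`). -/
theorem stmt_3 (p : ℕ) [hp : Fact p.Prime] (n : ℕ) (hn : 1 ≤ n) (L : ℤ)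
    (hL : IsLeast {v : ℤ | ∃ m : ℕ, n ≤ m ∧ v = (m : ℤ) - padicValNat p (Nat.factorial m)} L) :
    Submodule.span ℤ_[p]
        {x : ℚ_[p] | ∃ m : ℕ, n ≤ m ∧ x = (p : ℚ_[p]) ^ m / (Nat.factorial m : ℚ_[p])} =
      Submodule.span ℤ_[p] {(p : ℚ_[p]) ^ L} :=
  stmt_3_general p (hp := hp) n L hL
end

section
/- The element T^p lies in B, and its Teichmüller representative [T^p] in the ring W(B) of p-typical Witt vectors of B is uniquely divisible by p: there exists a unique Witt vector z ∈ W(B) such that p·z = [T^p]. -/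
noncomputable section

open LaurentPolynomial

/-- The fraction field `K = Frac(W(k))` of the ring of `p`-typical Witt vectors. -/
abbrev FracW (p : ℕ) [Fact p.Prime] (k : Type*) [CommRing k] :=
  FractionRing (WittVector p k)

/-- The `W(k)`-subalgebra `B` of the Laurent polynomial ring `K[T,T⁻¹]` generated by
`p·T⁻¹` together with the divided powers `T^n/n!` for all `n ≥ 1`. -/
def Bsub (p : ℕ) [Fact p.Prime] (k : Type*) [Field k] [CharP k p] :
    Subalgebra (WittVector p k) (LaurentPolynomial (FracW p k)) :=
  Algebra.adjoin (WittVector p k)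
    ({LaurentPolynomial.C ((p : FracW p k)) * T (-1)} ∪
      {f | ∃ n : ℕ, 1 ≤ n ∧
        f = LaurentPolynomial.C ((Nat.factorial n : FracW p k)⁻¹) * T (n : ℤ)})

/-! Over `ℚ` the ghost map identifies `W(ℚ)` with `ℚ^ℕ`, so `p` is a unit of `W(ℚ)`; let
`c = p⁻¹`. Pushed into `W(K[T,T⁻¹])`, the vector `z = [T^p]·c` satisfies `p·z = [T^p]` and has
coefficients `zₙ = cₙ T^(p^(n+1))`. The ghost equations `∑_{i ≤ n} p^i cᵢ^(p^(n-i)) = 1/p` show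
inductively that `p^(1 + p + ⋯ + p^n) cₙ ∈ ℤ`, and `1 + p + ⋯ + p^n = v_p((p^(n+1))!)`, so `zₙ` is
an integer multiple of the divided power `T^(p^(n+1)) / (p^(n+1))! ∈ B`. Hence `z ∈ W(B)`, and it is
unique there because `p` is a unit of `W(K[T,T⁻¹]) ⊇ W(B)`. -/

open Finset

namespace AddSubgroup

variable {R : Type*} [CommRing R] {a b x y : R}

theorem mul_mem_zmultiples_mul (hx : x ∈ zmultiples a) (hy : y ∈ zmultiples b) :
    x * y ∈ zmultiples (a * b) := by
  obtain ⟨m, rfl⟩ := mem_zmultiples_iff.1 hx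
  obtain ⟨n, rfl⟩ := mem_zmultiples_iff.1 hy
  exact mem_zmultiples_iff.2 ⟨m * n, by simp only [zsmul_eq_mul, Int.cast_mul]; ring⟩

theorem pow_mem_zmultiples_pow (hx : x ∈ zmultiples a) (k : ℕ) :
    x ^ k ∈ zmultiples (a ^ k) := by
  obtain ⟨m, rfl⟩ := mem_zmultiples_iff.1 hx
  exact mem_zmultiples_iff.2 ⟨m ^ k, by simp only [zsmul_eq_mul, Int.cast_pow, mul_pow]⟩

theorem zmultiples_zpow_le_zmultiples_zpow {K : Type*} [DivisionRing K] {q : ℕ}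
    (hq : (q : K) ≠ 0) {e f : ℤ} (h : e ≤ f) :
    zmultiples ((q : K) ^ f) ≤ zmultiples ((q : K) ^ e) := by
  obtain ⟨d, hd⟩ := Int.eq_ofNat_of_zero_le (sub_nonneg.2 h)
  rw [zmultiples_le, show f = d + e by omega, zpow_add₀ hq, zpow_natCast]
  exact mem_zmultiples_iff.2 ⟨((q ^ d : ℕ) : ℤ), by rw [zsmul_eq_mul]; push_cast; rfl⟩

end AddSubgroup

theorem Nat.sub_add_pow_mul_geom_sum_le {p : ℕ} (hp : 0 < p) {i n : ℕ} (h : i ≤ n) :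
    (n - i) + p ^ (n - i) * ∑ j ∈ range (i + 1), p ^ j ≤ ∑ j ∈ range (n + 1), p ^ j := by
  rw [show n + 1 = (n - i) + (i + 1) by omega, sum_range_add _ (n - i), mul_sum]
  simp only [pow_add]
  gcongr
  calc n - i = ∑ _j ∈ range (n - i), 1 := by simp
    _ ≤ ∑ j ∈ range (n - i), p ^ j := sum_le_sum fun j _ => Nat.one_le_pow j p hp

namespace WittVector

variable {p : ℕ} [Fact p.Prime]

instance charZero {k : Type*} [CommRing k] [CharP k p] [Nontrivial k] :
    CharZero (WittVector p k) :=
  charZero_of_injective_ringHom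
    (f := (map (ZMod.castHom dvd_rfl k)).comp (equiv p).symm.toRingHom)
    ((map_injective _ (ZMod.castHom dvd_rfl k).injective).comp (equiv p).symm.injective)

section CommRing

variable {R : Type*} [CommRing R]

theorem ghostComponent_eq_sum (n : ℕ) (x : WittVector p R) :
    ghostComponent n x = ∑ i ∈ range (n + 1), (p : R) ^ i * x.coeff i ^ p ^ (n - i) := by
  rw [ghostComponent_apply, aeval_wittPolynomial]

theorem isUnit_natCast_of_isUnit (hp : IsUnit (p : R)) : IsUnit (p : WittVector p R) := by
  let := hp.invertible
  rw [← MulEquiv.isUnit_map (ghostEquiv p R), map_natCast, Pi.isUnit_iff]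
  exact fun _ => hp

theorem teichmuller_mul_eq_mk (hp : IsUnit (p : R)) (r : R) (x : WittVector p R) :
    teichmuller p r * x = mk p fun n => r ^ p ^ n * x.coeff n := by
  let := hp.invertible
  apply (ghostMap.bijective_of_invertible p R).injective
  funext n
  rw [ghostMap_apply, ghostMap_apply, map_mul, ghostComponent_teichmuller, ghostComponent_eq_sum,
    ghostComponent_eq_sum, mul_sum]
  refine sum_congr rfl fun i hi => ?_
  rw [coeff_mk, mul_pow, ← pow_mul, ← pow_add, Nat.add_sub_cancel' (mem_range_succ_iff.1 hi)]
  ring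

theorem existsUnique_natCast_mul_eq {S : Type*} [CommRing S] {f : S →+* R}
    (hf : Function.Injective f) (hp : IsUnit (p : WittVector p R)) {w : WittVector p S}
    {x : WittVector p R} (hx : p * x = map f w) (hcoeff : ∀ n, x.coeff n ∈ f.range) :
    ∃! y : WittVector p S, p * y = w := by
  choose s hs using hcoeff
  have hmap : map f (mk p s) = x := ext fun n => by rw [map_coeff, coeff_mk, hs]
  refine ⟨mk p s, map_injective f hf ?_, fun y hy => map_injective f hf ?_⟩
  · rw [map_mul, map_natCast, hmap, hx]
  · apply hp.mul_left_cancel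
    rw [hmap, hx, ← hy, map_mul, map_natCast]

end CommRing

section Rat

open AddSubgroup

theorem coeff_mem_zmultiples_of_natCast_mul_eq_one {c : WittVector p ℚ}
    (hc : (p : WittVector p ℚ) * c = 1) (n : ℕ) :
    c.coeff n ∈ zmultiples ((p : ℚ) ^ (-((∑ j ∈ range (n + 1), p ^ j : ℕ) : ℤ))) := by
  induction n using Nat.strong_induction_on with
  | _ n ih =>
  have hp0 : (p : ℚ) ≠ 0 := by exact_mod_cast (Fact.out : p.Prime).ne_zero
  have hghost : (p : ℚ) * ∑ i ∈ range (n + 1), (p : ℚ) ^ i * c.coeff i ^ p ^ (n - i) = 1 := by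
    simpa only [map_mul, map_natCast, map_one, ghostComponent_eq_sum] using
      congrArg (ghostComponent n) hc
  have hcn : c.coeff n = (p : ℚ) ^ (-(n : ℤ)) *
      ((p : ℚ) ^ (-1 : ℤ) - ∑ i ∈ range n, (p : ℚ) ^ i * c.coeff i ^ p ^ (n - i)) := by
    rw [sum_range_succ, Nat.sub_self, pow_zero, pow_one] at hghost
    rw [zpow_neg, zpow_natCast, zpow_neg_one]
    field_simp
    linear_combination hghost
  have hexp := fun i (hi : i ≤ n) => Nat.sub_add_pow_mul_geom_sum_le (Fact.out : p.Prime).pos hi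
  set G : ℕ → ℤ := fun m => ((∑ j ∈ range (m + 1), p ^ j : ℕ) : ℤ) with hG
  rw [hcn, show -G n = -n + (n - G n) by ring, zpow_add₀ hp0]
  refine mul_mem_zmultiples_mul (mem_zmultiples _) (sub_mem ?_ (sum_mem fun i hi => ?_))
  · refine zmultiples_zpow_le_zmultiples_zpow hp0 ?_ (mem_zmultiples _)
    have h0 := hexp 0 n.zero_le
    have h1 := Nat.one_le_pow n p (Fact.out : p.Prime).pos
    simp only [Nat.sub_zero, zero_add, range_one, sum_singleton, pow_zero, mul_one] at h0
    simp only [hG]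
    omega
  · have hi := mem_range.1 hi
    have hterm := mul_mem_zmultiples_mul (mem_zmultiples ((p : ℚ) ^ i))
      (pow_mem_zmultiples_pow (ih i hi) (p ^ (n - i)))
    rw [← zpow_natCast, ← zpow_natCast, ← zpow_mul, ← zpow_add₀ hp0] at hterm
    refine zmultiples_zpow_le_zmultiples_zpow hp0 ?_ hterm
    have := hexp i hi.le
    zify [hi.le] at this
    simp only [hG]
    push_cast at this ⊢
    linarith

theorem coeff_mem_zmultiples_inv_factorial_of_natCast_mul_eq_one {c : WittVector p ℚ}
    (hc : (p : WittVector p ℚ) * c = 1) (n : ℕ) :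
    c.coeff n ∈ zmultiples (((p ^ (n + 1)).factorial : ℚ)⁻¹) := by
  obtain ⟨q, hq⟩ : p ^ (∑ j ∈ range (n + 1), p ^ j) ∣ (p ^ (n + 1)).factorial := by
    rw [← Nat.Prime.multiplicity_factorial_pow Fact.out]
    exact pow_multiplicity_dvd _ _
  refine zmultiples_le.2 (mem_zmultiples_iff.2 ⟨q, ?_⟩)
    (coeff_mem_zmultiples_of_natCast_mul_eq_one hc n)
  have hp0 : (p : ℚ) ≠ 0 := by exact_mod_cast (Fact.out : p.Prime).ne_zero
  have hq0 : (q : ℚ) ≠ 0 :=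
    Nat.cast_ne_zero.2 (by rintro rfl; exact Nat.factorial_ne_zero _ (by simpa using hq))
  rw [hq, zsmul_eq_mul, zpow_neg, zpow_natCast]
  push_cast
  field_simp

end Rat

end WittVector

theorem C_mul_T_mem_Bsub (p : ℕ) [Fact p.Prime] (k : Type*) [Field k] [CharP k p] {m : ℕ}
    (hm : 1 ≤ m) {x : ℚ} (hx : x ∈ AddSubgroup.zmultiples ((m.factorial : ℚ)⁻¹)) :
    C (x : FracW p k) * T m ∈ Bsub p k := by
  obtain ⟨a, rfl⟩ := AddSubgroup.mem_zmultiples_iff.1 hx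
  rw [zsmul_eq_mul, Rat.cast_mul, Rat.cast_inv, Rat.cast_intCast, Rat.cast_natCast, map_mul,
    map_intCast, mul_assoc]
  exact mul_mem (intCast_mem _ a) (Algebra.subset_adjoin (Or.inr ⟨m, hm, rfl⟩))

theorem stmt_7_general (p : ℕ) [Fact p.Prime] (k : Type*) [Field k] [CharP k p] :
    ∃ h : (T (p : ℤ) : LaurentPolynomial (FracW p k)) ∈ Bsub p k,
      ∃! z : WittVector p (Bsub p k),
        (p : WittVector p (Bsub p k)) * z =
          WittVector.teichmuller p (⟨T (p : ℤ), h⟩ : Bsub p k) := by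
  have hp : p.Prime := Fact.out
  have hpQ : IsUnit (p : ℚ) := by simpa using hp.ne_zero
  obtain ⟨c, hc⟩ := (WittVector.isUnit_natCast_of_isUnit (p := p) hpQ).exists_right_inv
  let ι : ℚ →+* LaurentPolynomial (FracW p k) := C.comp (Rat.castHom _)
  let z := WittVector.teichmuller p (T (p : ℤ)) * WittVector.map ι c
  have hT : T (p : ℤ) ∈ Bsub p k := by
    simpa using C_mul_T_mem_Bsub p k hp.one_le (x := 1)
      (AddSubgroup.mem_zmultiples_iff.2 ⟨p.factorial, by simp [Nat.factorial_ne_zero]⟩)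
  have hz_coeff (n : ℕ) : z.coeff n ∈ Bsub p k := by
    rw [show z = _ from WittVector.teichmuller_mul_eq_mk (by simpa using hpQ.map ι) _ _,
      WittVector.coeff_mk,
      WittVector.map_coeff, T_pow, mul_comm,
      show ((p ^ n : ℕ) : ℤ) * p = ((p ^ (n + 1) : ℕ) : ℤ) by push_cast; ring]
    exact C_mul_T_mem_Bsub p k (Nat.one_le_pow _ _ hp.pos)
      (WittVector.coeff_mem_zmultiples_inv_factorial_of_natCast_mul_eq_one hc n)
  have hpc : (p : WittVector p _) * WittVector.map ι c = 1 := by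
    rw [← map_natCast (WittVector.map ι), ← map_mul, hc, map_one]
  refine ⟨hT, WittVector.existsUnique_natCast_mul_eq (f := (Bsub p k).val) (x := z)
    Subtype.val_injective (.of_mul_eq_one _ hpc) ?_ fun n => ⟨⟨_, hz_coeff n⟩, rfl⟩⟩
  rw [WittVector.map_teichmuller, mul_left_comm, hpc, mul_one]
  rfl

/-- The element `T^p` lies in `B`, and its Teichmüller representative
`[T^p]` in the ring `W(B)` of `p`-typical Witt vectors of `B` is uniquely divisible
by `p`: there is a unique `z ∈ W(B)` with `p·z = [T^p]`. -/
theorem stmt_7 (p : ℕ) [Fact p.Prime] (k : Type*) [Field k] [CharP k p] [PerfectRing k p] :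
    ∃ h : (T (p : ℤ) : LaurentPolynomial (FracW p k)) ∈ Bsub p k,
      ∃! z : WittVector p (Bsub p k),
        (p : WittVector p (Bsub p k)) * z =
          WittVector.teichmuller p (⟨T (p : ℤ), h⟩ : Bsub p k) :=
  stmt_7_general p k
end
end

section
/- Let D ⊆ K[T] be the W(k)-subalgebra of the polynomial ring K[T] generated by the elements T^n/n! for all n ≥ 1 (the divided power polynomial algebra W(k)⟨T⟩), and let R = D[s] be a polynomial ring in one variable s over D. Let J ⊆ R be the ideal generated by the elements T^n/n! for n ≥ 1, and let I ⊆ R be the ideal generated by T·s − p. Then I ∩ J = I·J. -/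
noncomputable section

/-- The divided power polynomial algebra `D = W(k)⟨T⟩ ⊆ K[T]`: the `W(k)`-subalgebra of
the polynomial ring `K[T]` generated by the elements `T^n/n!` for all `n ≥ 1`, where
`K = Frac(W(k))`. -/
def Dsub (p : ℕ) [Fact p.Prime] (k : Type*) [Field k] [CharP k p]
    (K : Type*) [Field K] [Algebra (WittVector p k) K] :
    Subalgebra (WittVector p k) (Polynomial K) :=
  Algebra.adjoin (WittVector p k)
    {f | ∃ n : ℕ, 1 ≤ n ∧
      f = Polynomial.C ((Nat.factorial n : K)⁻¹) * Polynomial.X ^ n}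

namespace Stmt10Aux

open Polynomial

variable (p : ℕ) [Fact p.Prime] (k : Type*) [Field k] [CharP k p]
  (K : Type*) [Field K] [Algebra (WittVector p k) K]

lemma X_mem : (X : Polynomial K) ∈ Dsub p k K :=
  Algebra.subset_adjoin ⟨1, le_refl 1, by simp⟩

/-- The element `T` of `D`. -/
def d0 : Dsub p k K := ⟨X, X_mem p k K⟩

/-- The divided power ideal of `D`. -/
def J' : Ideal (Dsub p k K) :=
  Ideal.span {d | ∃ n : ℕ, 1 ≤ n ∧
    (d : Polynomial K) = C ((Nat.factorial n : K)⁻¹) * X ^ n}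

lemma d0_mem_J' : d0 p k K ∈ J' p k K :=
  Ideal.subset_span ⟨1, le_refl 1, by simp [d0]⟩

/-- Forward direction: elements of `J'` have zero constant coefficient. -/
lemma coeff_zero_of_mem_J' {d : Dsub p k K} (hd : d ∈ J' p k K) :
    (d : Polynomial K).coeff 0 = 0 := by
  have : J' p k K ≤ RingHom.ker
      ((constantCoeff : Polynomial K →+* K).comp (Dsub p k K).val.toRingHom) := by
    rw [J', Ideal.span_le]
    rintro d ⟨n, hn, hd⟩
    simp only [SetLike.mem_coe, RingHom.mem_ker, RingHom.comp_apply]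
    show ((d : Polynomial K)).coeff 0 = 0
    rw [hd, coeff_C_mul, coeff_X_pow, if_neg (by omega : ¬ (0 = n)), mul_zero]
  exact this hd

/-- Every element of `D` is a Witt vector plus an element of `J'`. -/
lemma exists_decomp (y : Dsub p k K) :
    ∃ w : WittVector p k, y - algebraMap (WittVector p k) (Dsub p k K) w ∈ J' p k K := by
  obtain ⟨x, hx⟩ := y
  induction hx using Algebra.adjoin_induction with
  | mem x hxS =>
    refine ⟨0, ?_⟩
    rw [map_zero, sub_zero]
    obtain ⟨n, hn, hxe⟩ := hxS
    exact Ideal.subset_span ⟨n, hn, hxe⟩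
  | algebraMap r =>
    refine ⟨r, ?_⟩
    have : (⟨algebraMap (WittVector p k) (Polynomial K) r, Subalgebra.algebraMap_mem _ r⟩ :
        Dsub p k K) = algebraMap (WittVector p k) (Dsub p k K) r := rfl
    rw [this, sub_self]
    exact zero_mem _
  | add x y hx hy ihx ihy =>
    obtain ⟨w₁, h₁⟩ := ihx
    obtain ⟨w₂, h₂⟩ := ihy
    refine ⟨w₁ + w₂, ?_⟩
    have : (⟨x + y, add_mem hx hy⟩ : Dsub p k K) -
        algebraMap (WittVector p k) (Dsub p k K) (w₁ + w₂) =
        ((⟨x, hx⟩ : Dsub p k K) - algebraMap _ _ w₁) +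
          ((⟨y, hy⟩ : Dsub p k K) - algebraMap _ _ w₂) := by
      rw [map_add]
      ext
      push_cast
      ring
    rw [this]
    exact add_mem h₁ h₂
  | mul x y hx hy ihx ihy =>
    obtain ⟨w₁, h₁⟩ := ihx
    obtain ⟨w₂, h₂⟩ := ihy
    refine ⟨w₁ * w₂, ?_⟩
    have : (⟨x * y, mul_mem hx hy⟩ : Dsub p k K) -
        algebraMap (WittVector p k) (Dsub p k K) (w₁ * w₂) =
        (⟨x, hx⟩ : Dsub p k K) * ((⟨y, hy⟩ : Dsub p k K) - algebraMap _ _ w₂) +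
          ((⟨x, hx⟩ : Dsub p k K) - algebraMap _ _ w₁) * algebraMap _ _ w₂ := by
      rw [map_mul]
      ext
      push_cast
      ring
    rw [this]
    exact add_mem (Ideal.mul_mem_left _ _ h₂) (Ideal.mul_mem_right _ _ h₁)

variable [IsFractionRing (WittVector p k) K]

/-- Characterization of `J'`: elements of `D` with zero constant coefficient. -/
lemma mem_J'_iff (d : Dsub p k K) :
    d ∈ J' p k K ↔ (d : Polynomial K).coeff 0 = 0 := by
  constructor
  · exact coeff_zero_of_mem_J' p k K
  · intro h
    obtain ⟨w, hw⟩ := exists_decomp p k K d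
    have hcoe : ((algebraMap (WittVector p k) (Dsub p k K) w : Dsub p k K) :
        Polynomial K) = C (algebraMap (WittVector p k) K w) := by
      rfl
    have h0 : (((d - algebraMap _ _ w : Dsub p k K)) : Polynomial K).coeff 0 = 0 :=
      coeff_zero_of_mem_J' p k K hw
    have : algebraMap (WittVector p k) K w = 0 := by
      have hsub : (((d - algebraMap _ _ w : Dsub p k K)) : Polynomial K) =
          (d : Polynomial K) - C (algebraMap (WittVector p k) K w) := by
        push_cast [hcoe]; ring
      rw [hsub] at h0
      simpa [h] using h0
    have hw0 : w = 0 := (IsFractionRing.injective (WittVector p k) K) (by simpa using this)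
    rw [hw0, map_zero, sub_zero] at hw
    exact hw

include k in
lemma p_ne_zero : (p : K) ≠ 0 := by
  have h1 : (p : WittVector p k) ≠ 0 := WittVector.p_nonzero p k
  have h2 : algebraMap (WittVector p k) K (p : WittVector p k) = (p : K) :=
    map_natCast (algebraMap (WittVector p k) K) p
  intro h
  exact h1 (IsFractionRing.injective (WittVector p k) K (by rw [h2, h, map_zero]))

/-- `J'` is `p`-saturated. -/
lemma p_saturated {c : Dsub p k K} (h : (p : Dsub p k K) * c ∈ J' p k K) :
    c ∈ J' p k K := by
  rw [mem_J'_iff] at h ⊢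
  have : (((p : Dsub p k K) * c : Dsub p k K) : Polynomial K) =
      (p : Polynomial K) * (c : Polynomial K) := by push_cast; ring
  rw [this] at h
  have hp : ((p : Polynomial K)).coeff 0 = (p : K) := by simp
  rw [mul_coeff_zero, hp] at h
  exact (mul_eq_zero.mp h).resolve_left (p_ne_zero p k K)

end Stmt10Aux

set_option maxHeartbeats 1000000 in
set_option synthInstance.maxHeartbeats 400000 in
open Polynomial Stmt10Aux in
/-- Let `K = Frac(W(k))`, let `D = W(k)⟨T⟩ ⊆ K[T]` be the divided
power polynomial algebra, and let `R = D[s]` be a polynomial ring over `D`. Let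
`J ⊆ R` be the ideal generated by the elements `T^n/n!` for `n ≥ 1`, and let `I ⊆ R`
be the ideal generated by `T·s − p`. Then `I ∩ J = I·J`. -/
theorem stmt_10 (p : ℕ) [Fact p.Prime] (k : Type*) [Field k] [CharP k p] [PerfectRing k p]
    (K : Type*) [Field K] [Algebra (WittVector p k) K]
    [IsFractionRing (WittVector p k) K]
    (I J : Ideal (Polynomial (Dsub p k K)))
    (hJ : J = Ideal.span {f | ∃ (d : Dsub p k K) (n : ℕ), 1 ≤ n ∧
        (d : Polynomial K) = Polynomial.C ((Nat.factorial n : K)⁻¹) * Polynomial.X ^ n ∧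
        f = Polynomial.C d})
    (hI : I = Ideal.span {f | ∃ d : Dsub p k K,
        (d : Polynomial K) = Polynomial.X ∧
        f = Polynomial.C d * Polynomial.X - (p : Polynomial (Dsub p k K))}) :
    I ⊓ J = I * J := by
  classical
  -- rewrite I as a principal ideal
  have hI' : I = Ideal.span {C (d0 p k K) * X - (p : Polynomial (Dsub p k K))} := by
    rw [hI]; congr 1
    ext f
    simp only [Set.mem_setOf_eq, Set.mem_singleton_iff]
    constructor
    · rintro ⟨d, hd, rfl⟩
      rw [show d = d0 p k K from Subtype.ext hd]
    · rintro rfl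
      exact ⟨d0 p k K, rfl, rfl⟩
  -- rewrite J as the map of J'
  have hJ' : J = Ideal.map (C : Dsub p k K →+* Polynomial (Dsub p k K)) (J' p k K) := by
    rw [hJ, J', Ideal.map_span]
    congr 1
    ext f
    simp only [Set.mem_setOf_eq, Set.mem_image]
    constructor
    · rintro ⟨d, n, hn, hd, rfl⟩
      exact ⟨d, ⟨n, hn, hd⟩, rfl⟩
    · rintro ⟨d, ⟨n, hn, hd⟩, rfl⟩
      exact ⟨d, n, hn, hd, rfl⟩
  refine le_antisymm ?_ Ideal.mul_le_inf
  intro f hf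
  have hfI : f ∈ I := (inf_le_left : I ⊓ J ≤ I) hf
  have hfJ : f ∈ J := (inf_le_right : I ⊓ J ≤ J) hf
  rw [hI', Ideal.mem_span_singleton] at hfI
  obtain ⟨g, rfl⟩ := hfI
  set e : Polynomial (Dsub p k K) := C (d0 p k K) * X - (p : Polynomial (Dsub p k K))
    with he
  -- C d0 ∈ J
  have hCd0 : C (d0 p k K) ∈ J := by
    rw [hJ']
    exact Ideal.mem_map_of_mem _ (d0_mem_J' p k K)
  have hpg : (p : Polynomial (Dsub p k K)) * g ∈ J := by
    have : (p : Polynomial (Dsub p k K)) * g = C (d0 p k K) * (X * g) - e * g := by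
      rw [he]; ring
    rw [this]
    have h1 : C (d0 p k K) * (X * g) ∈ J := Ideal.mul_mem_right (X * g) J hCd0
    show C (d0 p k K) * (X * g) - e * g ∈ J
    exact @Ideal.sub_mem (Polynomial (Dsub p k K)) _ J _ _ h1 hfJ
  have hg : g ∈ J := by
    rw [hJ', Ideal.mem_map_C_iff] at hpg ⊢
    intro n
    have h := hpg n
    have hc : ((p : Polynomial (Dsub p k K)) * g).coeff n =
        (p : Dsub p k K) * g.coeff n := by
      rw [← Polynomial.C_eq_natCast, coeff_C_mul]
    rw [hc] at h
    exact p_saturated p k K h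
  have heI : e ∈ I := by
    rw [hI']
    exact Ideal.subset_span rfl
  exact Ideal.mul_mem_mul heI hg
end
end

section
/- Let κ be a field and let M be a finitely generated ℤ-graded κ[v]-module. If dim_κ M/vM = dim_κ M/(v−1)M, then M is a free κ[v]-module. (Geometrically: a G_m-equivariant coherent sheaf on the affine line over κ whose fibers at the origin and at a nonzero point have the same dimension is a vector bundle.) -/
/-!
Since `v` lowers degrees, comparing top-degree components shows that every polynomial with
nonzero constant term acts injectively on `M`; hence the torsion submodule `T` is killed by a
power `v ^ k`. Then `v - 1` acts invertibly on `T`, so `T ⊆ (v - 1) M` and the fiber of `M` at `1`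
is that of the free quotient `F = M / T`. At `0` the opposite happens: if `T ≠ 0` then
`T ⊄ v M` (otherwise `T = v T = v ^ k T = 0`), so the fiber of `M` at `0` is strictly bigger than
that of `F`. Both fibers of `F` have dimension `rank F`, so equal fiber dimensions force `T = 0`,
and a finitely generated torsion-free module over the PID `κ[v]` is free.
-/

open Polynomial Module TensorProduct

section Filtration

variable {κ M : Type*} [CommRing κ] [AddCommGroup M] [Module κ M] {ℱ : ℤ → Submodule κ M}

variable (ℱ) in
def filtrationLE (n : ℤ) : Submodule κ M := Submodule.span κ (⋃ i ≤ n, (ℱ i : Set M))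

theorem mem_filtrationLE_of_mem {i n : ℤ} (hin : i ≤ n) {x : M} (hx : x ∈ ℱ i) :
    x ∈ filtrationLE ℱ n :=
  Submodule.subset_span (Set.mem_biUnion hin hx)

theorem filtrationLE_mono {m n : ℤ} (h : m ≤ n) : filtrationLE ℱ m ≤ filtrationLE ℱ n :=
  Submodule.span_mono (Set.biUnion_mono (fun _ hi => le_trans hi h) fun _ _ => le_rfl)

theorem decompose_eq_zero_of_mem_filtrationLE [DirectSum.Decomposition ℱ] {m n : ℤ}
    (hmn : m < n) {x : M} (hx : x ∈ filtrationLE ℱ m) : DirectSum.decompose ℱ x n = 0 := by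
  induction hx using Submodule.span_induction with
  | mem y hy =>
    obtain ⟨i, hi, hy⟩ := Set.mem_iUnion₂.1 hy
    exact Subtype.ext (DirectSum.decompose_of_mem_ne ℱ hy (by omega))
  | zero => simp
  | add y z _ _ hy hz => simp [hy, hz]
  | smul a y _ hy => rw [DirectSum.decompose_smul, DFinsupp.smul_apply, hy, smul_zero]

theorem mem_filtrationLE_of_decompose_eq_zero [DirectSum.Decomposition ℱ] {n : ℤ} {x : M}
    (hx : ∀ i, n < i → DirectSum.decompose ℱ x i = 0) : x ∈ filtrationLE ℱ n := by
  classical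
  rw [← DirectSum.sum_support_decompose ℱ x]
  refine Submodule.sum_mem _ fun i hi => mem_filtrationLE_of_mem ?_ (Submodule.coe_mem _)
  by_contra hin
  exact DFinsupp.mem_support_iff.1 hi (hx i (by omega))

variable [Module κ[X] M] [IsScalarTower κ κ[X] M]

theorem X_smul_mem_filtrationLE (hdeg : ∀ i : ℤ, ∀ x ∈ ℱ i, (X : κ[X]) • x ∈ ℱ (i - 1))
    {n : ℤ} {x : M} (hx : x ∈ filtrationLE ℱ n) :
    (X : κ[X]) • x ∈ filtrationLE ℱ (n - 1) := by
  induction hx using Submodule.span_induction with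
  | mem y hy =>
    obtain ⟨i, hi, hy⟩ := Set.mem_iUnion₂.1 hy
    exact mem_filtrationLE_of_mem (by omega) (hdeg i y hy)
  | zero => simp
  | add y z _ _ hy hz => simpa using add_mem hy hz
  | smul a y _ hy => simpa [smul_comm (X : κ[X]) a y] using Submodule.smul_mem _ a hy

theorem smul_mem_filtrationLE (hdeg : ∀ i : ℤ, ∀ x ∈ ℱ i, (X : κ[X]) • x ∈ ℱ (i - 1))
    (p : κ[X]) {n : ℤ} {x : M} (hx : x ∈ filtrationLE ℱ n) :
    p • x ∈ filtrationLE ℱ n := by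
  induction p using Polynomial.induction_on generalizing x with
  | C a => rw [← Polynomial.algebraMap_eq, algebraMap_smul]; exact Submodule.smul_mem _ a hx
  | add p q hp hq => rw [add_smul]; exact add_mem (hp hx) (hq hx)
  | monomial k a ih =>
    have hXx : (X : κ[X]) • x ∈ filtrationLE ℱ n :=
      filtrationLE_mono (Int.sub_le_self n zero_le_one) (X_smul_mem_filtrationLE hdeg hx)
    rw [pow_succ, ← mul_assoc, mul_smul]
    exact ih hXx

end Filtration

theorem eq_zero_of_smul_eq_zero_of_coeff_zero_ne_zero {κ M : Type*} [Field κ] [AddCommGroup M]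
    [Module κ M] [Module κ[X] M] [IsScalarTower κ κ[X] M] {ℱ : ℤ → Submodule κ M}
    (hint : DirectSum.IsInternal ℱ) (hdeg : ∀ i : ℤ, ∀ x ∈ ℱ i, (X : κ[X]) • x ∈ ℱ (i - 1))
    {q : κ[X]} (hq : q.coeff 0 ≠ 0) {x : M} (hqx : q • x = 0) : x = 0 := by
  classical
  let := hint.chooseDecomposition
  by_contra hx
  have hs : (DirectSum.decompose ℱ x).support.Nonempty := by
    rw [Finset.nonempty_iff_ne_empty, Ne, DFinsupp.support_eq_empty]
    exact fun h => hx (by simpa using congrArg (DirectSum.decompose ℱ).symm h)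
  set n := (DirectSum.decompose ℱ x).support.max' hs
  have hxn : x ∈ filtrationLE ℱ n := mem_filtrationLE_of_decompose_eq_zero fun i hi => by
    by_contra h
    exact (Finset.le_max' _ i (DFinsupp.mem_support_iff.2 h)).not_gt hi
  -- `q = X * divX q + C (q.coeff 0)`, and the first summand pushes `x` below degree `n`.
  have htop : DirectSum.decompose ℱ (q • x) n = q.coeff 0 • DirectSum.decompose ℱ x n := by
    conv_lhs => rw [← X_mul_divX_add q, add_smul, mul_smul, ← Polynomial.algebraMap_eq,
      algebraMap_smul]
    rw [DirectSum.decompose_add, DirectSum.decompose_smul, DFinsupp.add_apply,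
      decompose_eq_zero_of_mem_filtrationLE (sub_one_lt n)
        (X_smul_mem_filtrationLE hdeg (smul_mem_filtrationLE hdeg _ hxn)), zero_add,
      DFinsupp.smul_apply]
  rw [hqx, DirectSum.decompose_zero, DFinsupp.zero_apply, eq_comm, smul_eq_zero] at htop
  exact DFinsupp.mem_support_iff.1 (Finset.max'_mem _ hs) (htop.resolve_left hq)

theorem mem_span_sub_one_smul_top_of_pow_smul_eq_zero {R M : Type*} [CommRing R]
    [AddCommGroup M] [Module R M] {r : R} {k : ℕ} {t : M} (h : r ^ k • t = 0) :
    t ∈ Ideal.span {r - 1} • (⊤ : Submodule R M) := by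
  have ht : (r - 1) • (-(∑ i ∈ Finset.range k, r ^ i) • t) = t := by
    rw [smul_smul, mul_neg, mul_comm, geom_sum_mul, neg_smul, sub_smul, h, one_smul, zero_sub,
      neg_neg]
  exact ht ▸ Submodule.smul_mem_smul (Ideal.mem_span_singleton_self _) Submodule.mem_top

theorem torsion_eq_bot_of_le_span_smul_top {R M : Type*} [CommRing R] [IsDomain R]
    [AddCommGroup M] [Module R M] {r : R} (hr : r ≠ 0) {k : ℕ}
    (hk : ∀ t ∈ Submodule.torsion R M, r ^ k • t = 0)
    (hle : Submodule.torsion R M ≤ Ideal.span {r} • ⊤) : Submodule.torsion R M = ⊥ := by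
  have hdiv : ∀ t ∈ Submodule.torsion R M, ∃ u ∈ Submodule.torsion R M, t = r • u := by
    intro t ht
    have := hle ht
    rw [Submodule.ideal_span_singleton_smul, Submodule.mem_smul_pointwise_iff_exists] at this
    obtain ⟨u, -, rfl⟩ := this
    refine ⟨u, (Submodule.mem_torsion_iff u).2 ⟨⟨r ^ (k + 1), ?_⟩, ?_⟩, rfl⟩
    · exact mem_nonZeroDivisors_of_ne_zero (pow_ne_zero _ hr)
    · rw [Submonoid.mk_smul, pow_succ, mul_smul, hk _ ht]
  have hpow : ∀ n : ℕ, ∀ t ∈ Submodule.torsion R M, ∃ u ∈ Submodule.torsion R M,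
      t = r ^ n • u := by
    intro n
    induction n with
    | zero => exact fun t ht => ⟨t, ht, by rw [pow_zero, one_smul]⟩
    | succ n ih =>
      intro t ht
      obtain ⟨u, hu, rfl⟩ := ih t ht
      obtain ⟨w, hw, rfl⟩ := hdiv u hu
      exact ⟨w, hw, by rw [pow_succ, mul_smul]⟩
  refine (Submodule.eq_bot_iff _).2 fun t ht => ?_
  obtain ⟨u, hu, rfl⟩ := hpow k t ht
  exact hk u hu

theorem exists_X_pow_smul_torsion_eq_zero {κ M : Type*} [Field κ] [AddCommGroup M]
    [Module κ[X] M] [Module.Finite κ[X] M]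
    (h : ∀ q : κ[X], q.coeff 0 ≠ 0 → ∀ x : M, q • x = 0 → x = 0) :
    ∃ k : ℕ, ∀ t ∈ Submodule.torsion κ[X] M, (X : κ[X]) ^ k • t = 0 := by
  obtain ⟨a, ha, ha0⟩ := Submodule.annihilator_top_inter_nonZeroDivisors
    (Submodule.torsion_isTorsion (R := κ[X]) (M := M))
  obtain ⟨q, hq, hqX⟩ :=
    exists_eq_pow_rootMultiplicity_mul_and_not_dvd a (nonZeroDivisors.ne_zero ha0) 0
  rw [map_zero, sub_zero] at hq hqX
  refine ⟨rootMultiplicity 0 a, fun t ht => h q (fun h0 => hqX (X_dvd_iff.2 h0)) _ ?_⟩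
  have := Submodule.mem_annihilator.1 ha ⟨t, ht⟩ Submodule.mem_top
  rw [hq, mul_comm, mul_smul] at this
  exact congrArg Subtype.val this

theorem finrank_quotient_sup_smul_top {κ R M : Type*} [CommRing κ] [CommRing R] [Algebra κ R]
    [AddCommGroup M] [Module κ M] [Module R M] [IsScalarTower κ R M]
    (N : Submodule R M) (I : Ideal R) :
    finrank κ (M ⧸ N ⊔ I • ⊤) = finrank κ ((M ⧸ N) ⧸ (I • ⊤ : Submodule R (M ⧸ N))) := by
  have hmap : (I • ⊤ : Submodule R M).map N.mkQ = I • ⊤ := by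
    rw [Submodule.map_smul'', Submodule.map_top, Submodule.range_mkQ]
  exact (((Submodule.quotEquivOfEq _ _ hmap.symm).trans
    (Submodule.quotientQuotientEquivQuotientSup N (I • ⊤))).restrictScalars κ).finrank_eq.symm

theorem Submodule.finrank_quotient_lt_finrank_quotient {κ R M : Type*} [Field κ] [Ring R]
    [Algebra κ R] [AddCommGroup M] [Module κ M] [Module R M] [IsScalarTower κ R M]
    {A B : Submodule R M} (h : A < B) [FiniteDimensional κ (M ⧸ A)] :
    finrank κ (M ⧸ B) < finrank κ (M ⧸ A) := by
  let f : (M ⧸ A) →ₗ[κ] M ⧸ B := (Submodule.factor h.le).restrictScalars κ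
  have hrange : LinearMap.range f = ⊤ :=
    LinearMap.range_eq_top.2 (Submodule.factor_surjective h.le)
  obtain ⟨b, hbB, hbA⟩ := SetLike.exists_of_lt h
  have hker : LinearMap.ker f ≠ ⊥ := by
    refine (Submodule.ne_bot_iff _).2 ⟨Submodule.Quotient.mk b, ?_, ?_⟩
    · simpa [f] using hbB
    · simpa using hbA
  have := f.finrank_range_add_finrank_ker
  rw [hrange, finrank_top] at this
  have := Submodule.finrank_eq_zero.not.2 hker
  omega

section Fibers

variable {κ M : Type*} [Field κ] [AddCommGroup M] [Module κ M] [Module κ[X] M]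
  [IsScalarTower κ κ[X] M]

theorem finite_quotient_X_sub_C_smul_top [Module.Finite κ[X] M] (c : κ) :
    Module.Finite κ (M ⧸ (Ideal.span {X - C c} • ⊤ : Submodule κ[X] M)) := by
  have : Module.Finite κ (κ[X] ⧸ Ideal.span {X - C c}) :=
    .equiv (quotientSpanXSubCAlgEquiv c).toLinearEquiv.symm
  have : Module.Finite κ ((κ[X] ⧸ Ideal.span {X - C c}) ⊗[κ[X]] M) :=
    .trans (κ[X] ⧸ Ideal.span {X - C c}) _
  exact .equiv ((quotTensorEquivQuotSMul M (Ideal.span {X - C c})).restrictScalars κ)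

theorem finrank_quotient_X_sub_C_smul_top [Module.Free κ[X] M] [Module.Finite κ[X] M] (c : κ) :
    finrank κ (M ⧸ (Ideal.span {X - C c} • ⊤ : Submodule κ[X] M)) = finrank κ[X] M := by
  let I := Ideal.span {X - C c}
  have : Nontrivial (κ[X] ⧸ I) := (quotientSpanXSubCAlgEquiv c).toEquiv.nontrivial
  rw [← ((quotTensorEquivQuotSMul M I).restrictScalars κ).finrank_eq,
    ← Module.finrank_mul_finrank κ (κ[X] ⧸ I) ((κ[X] ⧸ I) ⊗[κ[X]] M),
    (quotientSpanXSubCAlgEquiv c).toLinearEquiv.finrank_eq, finrank_self, one_mul,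
    finrank_baseChange]

theorem torsion_eq_bot_of_finrank_quotient_eq [Module.Finite κ[X] M] {k : ℕ}
    (hk : ∀ t ∈ Submodule.torsion κ[X] M, (X : κ[X]) ^ k • t = 0)
    (hdim : finrank κ (M ⧸ (Ideal.span {(X : κ[X])} • ⊤ : Submodule κ[X] M)) =
      finrank κ (M ⧸ (Ideal.span {(X : κ[X]) - 1} • ⊤ : Submodule κ[X] M))) :
    Submodule.torsion κ[X] M = ⊥ := by
  set T := Submodule.torsion κ[X] M
  by_contra hT
  have hT1 : T ≤ Ideal.span {(X : κ[X]) - 1} • ⊤ := fun t ht =>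
    mem_span_sub_one_smul_top_of_pow_smul_eq_zero (hk t ht)
  have hTX : ¬ T ≤ Ideal.span {(X : κ[X])} • ⊤ := fun h =>
    hT (torsion_eq_bot_of_le_span_smul_top X_ne_zero hk h)
  have : FiniteDimensional κ (M ⧸ (Ideal.span {(X : κ[X])} • ⊤ : Submodule κ[X] M)) := by
    have := finite_quotient_X_sub_C_smul_top (κ := κ) (M := M) 0
    rwa [map_zero, sub_zero] at this
  have hlt := Submodule.finrank_quotient_lt_finrank_quotient (κ := κ)
    (right_lt_sup.2 hTX : Ideal.span {(X : κ[X])} • ⊤ < T ⊔ Ideal.span {(X : κ[X])} • ⊤)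
  have : Module.Free κ[X] (M ⧸ T) := Module.free_of_finite_type_torsion_free'
  have h0 := finrank_quotient_X_sub_C_smul_top (κ := κ) (M := M ⧸ T) 0
  have h1 := finrank_quotient_X_sub_C_smul_top (κ := κ) (M := M ⧸ T) 1
  rw [map_zero, sub_zero, ← finrank_quotient_sup_smul_top] at h0
  rw [map_one, ← finrank_quotient_sup_smul_top, sup_eq_right.2 hT1] at h1
  omega

end Fibers

/-- Let `κ` be a field and `M` a finitely generated ℤ-graded
`κ[v]`-module (with `v` of degree `−1`). If `dim_κ M/vM = dim_κ M/(v−1)M`, then `M`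
is a free `κ[v]`-module. -/
theorem stmt_11 (κ : Type*) [Field κ] (M : Type*) [AddCommGroup M] [Module κ M]
    [Module (Polynomial κ) M] [IsScalarTower κ (Polynomial κ) M]
    [Module.Finite (Polynomial κ) M]
    (ℱ : ℤ → Submodule κ M) (hint : DirectSum.IsInternal ℱ)
    (hdeg : ∀ i : ℤ, ∀ x ∈ ℱ i, (Polynomial.X : Polynomial κ) • x ∈ ℱ (i - 1))
    (hdim : Module.finrank κ
        (M ⧸ (Ideal.span {(Polynomial.X : Polynomial κ)} •
          (⊤ : Submodule (Polynomial κ) M))) =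
      Module.finrank κ
        (M ⧸ (Ideal.span {(Polynomial.X : Polynomial κ) - 1} •
          (⊤ : Submodule (Polynomial κ) M)))) :
    Module.Free (Polynomial κ) M := by
  obtain ⟨k, hk⟩ := exists_X_pow_smul_torsion_eq_zero fun q hq x hqx =>
    eq_zero_of_smul_eq_zero_of_coeff_zero_ne_zero hint hdeg hq hqx
  have : IsTorsionFree κ[X] M :=
    Submodule.isTorsionFree_iff_torsion_eq_bot.2 (torsion_eq_bot_of_finrank_quotient_eq hk hdim)
  exact Module.free_of_finite_type_torsion_free'
end

section
/- Let M be a finitely generated ℤ-graded k[v]-module and suppose there exists a σ_k-semilinear bijection φ: M/vM → M/(v−1)M. Then M is a free k[v]-module. (This is the assertion that the pullback of a Fontaine–Laffaille module killed by p to the affine line over k is a vector bundle.) -/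
/-!
The grading makes `M` `X`-adically separated: `M` is generated in degrees `≤ D`, so
`X ^ n • M` lies in degrees `≤ D - n`. If `a = X ^ m * b` with `X ∤ b` kills `x`, then `b` is
invertible modulo every `X ^ n`, so `X ^ m • x ∈ ⋂ X ^ n • M = 0`: the torsion `T` is `X`-power
torsion. Hence `X - 1` is invertible on `T`, `T ⊆ (X - 1) • M`, and `M/(X-1)M ≅ F/(X-1)F` for the
free quotient `F = M/T`. The semilinear bijection gives
`dim M/XM = dim M/(X-1)M = rk F = dim F/XF`, so the surjection `M/XM → F/XF` is injective, i.e.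
`T ⊆ X • M`. As `T` is saturated this means `T = X • T`, whence `T ⊆ ⋂ X ^ n • M = 0`.
-/

open Polynomial

section QuotientBySingleton

variable {R M : Type*} [CommRing R] [AddCommGroup M] [Module R M]

theorem Submodule.mem_ideal_span_singleton_smul_top {a : R} {x : M} :
    x ∈ Ideal.span {a} • (⊤ : Submodule R M) ↔ ∃ y, a • y = x := by
  simp [Submodule.ideal_span_singleton_smul, Submodule.mem_smul_pointwise_iff_exists]

theorem Submodule.mem_ideal_span_singleton_smul_top_of_isCoprime {a b : R} (hab : IsCoprime a b)
    {x : M} (hx : a • x = 0) : x ∈ Ideal.span {b} • (⊤ : Submodule R M) := by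
  obtain ⟨u, v, huv⟩ := hab
  refine Submodule.mem_ideal_span_singleton_smul_top.2 ⟨v • x, ?_⟩
  calc b • v • x = (u * a + v * b) • x := by rw [add_smul, mul_smul, hx, smul_zero, zero_add,
          smul_smul, mul_comm]
    _ = x := by rw [huv, one_smul]

abbrev Submodule.mkQModSpanSingleton (N : Submodule R M) (a : R) :
    M ⧸ Ideal.span {a} • (⊤ : Submodule R M) →ₗ[R]
      (M ⧸ N) ⧸ Ideal.span {a} • (⊤ : Submodule R (M ⧸ N)) :=
  Submodule.mapQ _ _ N.mkQ (Submodule.smul_top_le_comap_smul_top _ _)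

theorem Submodule.mkQModSpanSingleton_surjective (N : Submodule R M) (a : R) :
    Function.Surjective (N.mkQModSpanSingleton a) := by
  rw [← LinearMap.range_eq_top, Submodule.range_mapQ, LinearMap.range_eq_top.2 N.mkQ_surjective,
    Submodule.map_top, Submodule.range_mkQ]

theorem Submodule.mkQModSpanSingleton_injective_iff (N : Submodule R M) (a : R) :
    Function.Injective (N.mkQModSpanSingleton a) ↔ N ≤ Ideal.span {a} • ⊤ := by
  rw [← LinearMap.ker_eq_bot, Submodule.ker_mapQ,
    Submodule.comap_smul_top_of_surjective _ _ N.mkQ_surjective, Submodule.ker_mkQ,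
    eq_bot_iff, Submodule.map_le_iff_le_comap, Submodule.comap_bot, Submodule.ker_mkQ,
    sup_le_iff]
  exact and_iff_right le_rfl

end QuotientBySingleton

section Torsion

variable {R M : Type*} [CommRing R] [IsDomain R] [AddCommGroup M] [Module R M] {π : R}

theorem Submodule.mem_torsion_of_smul_mem_torsion (hπ : π ≠ 0) {x : M}
    (hx : π • x ∈ Submodule.torsion R M) : x ∈ Submodule.torsion R M := by
  obtain ⟨a, ha⟩ := hx
  exact ⟨a * ⟨π, mem_nonZeroDivisors_of_ne_zero hπ⟩, by rw [mul_smul]; exact ha⟩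

theorem Submodule.torsion_eq_bot_of_le_ideal_span_singleton_smul_top
    [IsHausdorff (Ideal.span {π}) M] (hπ : π ≠ 0)
    (h : Submodule.torsion R M ≤ Ideal.span {π} • ⊤) : Submodule.torsion R M = ⊥ := by
  have hdiv : ∀ n : ℕ, ∀ x ∈ Submodule.torsion R M,
      ∃ y ∈ Submodule.torsion R M, π ^ n • y = x := by
    intro n
    induction n with
    | zero => exact fun x hx => ⟨x, hx, by rw [pow_zero, one_smul]⟩
    | succ n ih =>
      intro x hx
      obtain ⟨y, hy, rfl⟩ := ih x hx
      obtain ⟨z, rfl⟩ := Submodule.mem_ideal_span_singleton_smul_top.1 (h hy)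
      exact ⟨z, Submodule.mem_torsion_of_smul_mem_torsion hπ hy, by rw [pow_succ, mul_smul]⟩
  refine (Submodule.eq_bot_iff _).2 fun x hx => IsHausdorff.haus ‹_› x fun n => ?_
  obtain ⟨y, -, rfl⟩ := hdiv n x hx
  rw [SModEq.zero, Ideal.span_singleton_pow, Submodule.mem_ideal_span_singleton_smul_top]
  exact ⟨y, rfl⟩

variable [IsPrincipalIdealRing R]

theorem Submodule.exists_pow_smul_eq_zero_of_mem_torsion [IsHausdorff (Ideal.span {π}) M]
    (hπ : Irreducible π) {x : M} (hx : x ∈ Submodule.torsion R M) : ∃ m : ℕ, π ^ m • x = 0 := by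
  obtain ⟨⟨a, ha⟩, hax⟩ := hx
  obtain ⟨m, b, hπb, rfl⟩ := WfDvdMonoid.max_power_factor (nonZeroDivisors.ne_zero ha) hπ
  refine ⟨m, IsHausdorff.haus ‹_› _ fun n => ?_⟩
  rw [SModEq.zero, Ideal.span_singleton_pow]
  refine Submodule.mem_ideal_span_singleton_smul_top_of_isCoprime
    (hπ.coprime_pow_of_not_dvd n hπb) ?_
  rwa [smul_smul, mul_comm]

theorem Submodule.torsion_le_ideal_span_singleton_smul_top_of_isCoprime
    [IsHausdorff (Ideal.span {π}) M] (hπ : Irreducible π) {b : R} (hπb : IsCoprime π b) :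
    Submodule.torsion R M ≤ Ideal.span {b} • ⊤ := fun x hx => by
  obtain ⟨m, hm⟩ := Submodule.exists_pow_smul_eq_zero_of_mem_torsion hπ hx
  exact Submodule.mem_ideal_span_singleton_smul_top_of_isCoprime hπb.pow_left hm

end Torsion

section Grading

variable {R M : Type*} [CommRing R] [AddCommGroup M] [Module R M] {ℱ : ℤ → Submodule R M}

theorem DirectSum.IsInternal.eq_zero_of_forall_mem_iSup_le (hint : DirectSum.IsInternal ℱ)
    {x : M} (hx : ∀ c, x ∈ ⨆ i ≤ c, ℱ i) : x = 0 := by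
  have hx' : x ∈ ⨆ i, ℱ i := hint.submodule_iSup_eq_top ▸ Submodule.mem_top
  obtain ⟨s, hs⟩ := Submodule.mem_iSup_iff_exists_finset.1 hx'
  obtain ⟨c, hc⟩ := s.bddBelow
  have hdisj := hint.submodule_iSupIndep.disjoint_biSup_biSup
    (s := Set.Iio c) (t := s) (Set.disjoint_left.2 fun i hi his => (not_le.2 hi) (hc his))
  exact (Submodule.disjoint_def.1 hdisj) x (by simpa using hx (c - 1)) hs

variable [Module R[X] M] [IsScalarTower R R[X] M]

theorem Submodule.polynomial_smul_mem_of_X_smul_mem {N : Submodule R M}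
    (hN : ∀ x ∈ N, (X : R[X]) • x ∈ N) (f : R[X]) {x : M} (hx : x ∈ N) : f • x ∈ N := by
  have hpow : ∀ n : ℕ, (X : R[X]) ^ n • x ∈ N := by
    intro n
    induction n with
    | zero => rwa [pow_zero, one_smul]
    | succ n ih => rw [pow_succ', mul_smul]; exact hN _ ih
  induction f using Polynomial.induction_on' with
  | add f g hf hg => rw [add_smul]; exact N.add_mem hf hg
  | monomial n c =>
    rw [← C_mul_X_pow_eq_monomial, mul_smul, ← algebraMap_eq, algebraMap_smul]
    exact N.smul_mem c (hpow n)

theorem X_smul_mem_iSup_le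
    (hdeg : ∀ i, ∀ x ∈ ℱ i, (X : R[X]) • x ∈ ℱ (i - 1)) {c : ℤ} {x : M}
    (hx : x ∈ ⨆ i ≤ c, ℱ i) :
    (X : R[X]) • x ∈ ⨆ i ≤ c - 1, ℱ i := by
  let lX : M →ₗ[R] M := (LinearMap.lsmul R[X] M X).restrictScalars R
  refine (iSup₂_le fun i hi => ?_ : ⨆ i ≤ c, ℱ i ≤ (⨆ i ≤ c - 1, ℱ i).comap lX) hx
  exact fun y hy => le_iSup₂_of_le (f := fun i (_ : i ≤ c - 1) => ℱ i) (i - 1) (by omega) le_rfl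
    (hdeg i y hy)

theorem X_pow_smul_mem_iSup_le
    (hdeg : ∀ i, ∀ x ∈ ℱ i, (X : R[X]) • x ∈ ℱ (i - 1)) {c : ℤ} (n : ℕ) {x : M}
    (hx : x ∈ ⨆ i ≤ c, ℱ i) :
    (X : R[X]) ^ n • x ∈ ⨆ i ≤ c - n, ℱ i := by
  induction n with
  | zero => simpa using hx
  | succ n ih =>
    rw [pow_succ', mul_smul, Nat.cast_succ, ← sub_sub]
    exact X_smul_mem_iSup_le hdeg ih

theorem exists_iSup_le_eq_top [Module.Finite R[X] M]
    (hdeg : ∀ i, ∀ x ∈ ℱ i, (X : R[X]) • x ∈ ℱ (i - 1)) (hℱ : ⨆ i, ℱ i = ⊤) :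
    ∃ D : ℤ, ⨆ i ≤ D, ℱ i = ⊤ := by
  have hmono : Monotone fun c : ℤ => ⨆ i ≤ c, ℱ i :=
    fun c d hcd => biSup_mono fun i hi => hi.trans hcd
  have hcover : ∀ x : M, ∃ c, x ∈ ⨆ i ≤ c, ℱ i := by
    intro x
    have hle : ⨆ i, ℱ i ≤ ⨆ c, ⨆ i ≤ c, ℱ i :=
      iSup_mono fun c => le_iSup₂_of_le c le_rfl le_rfl
    exact (Submodule.mem_iSup_of_directed _ hmono.directed_le).1 (hle (hℱ ▸ trivial))
  choose deg hdeg' using hcover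
  obtain ⟨S, hS⟩ := Module.Finite.fg_top (R := R[X]) (M := M)
  obtain ⟨D, hD⟩ := (S.image deg).exists_le
  let N : Submodule R[X] M :=
    { (⨆ i ≤ D, ℱ i).toAddSubmonoid with
      smul_mem' := fun f x hx => Submodule.polynomial_smul_mem_of_X_smul_mem
        (fun y hy => hmono (by omega) (X_smul_mem_iSup_le hdeg hy)) f hx }
  have hSN : Submodule.span R[X] (S : Set M) ≤ N := Submodule.span_le.2 fun s hs =>
    hmono (hD _ (Finset.mem_image_of_mem deg hs)) (hdeg' s)
  exact ⟨D, eq_top_iff.2 fun x _ => hSN (hS ▸ Submodule.mem_top)⟩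

theorem DirectSum.IsInternal.isHausdorff_span_X [Module.Finite R[X] M]
    (hint : DirectSum.IsInternal ℱ) (hdeg : ∀ i, ∀ x ∈ ℱ i, (X : R[X]) • x ∈ ℱ (i - 1)) :
    IsHausdorff (Ideal.span {(X : R[X])}) M := by
  obtain ⟨D, hD⟩ := exists_iSup_le_eq_top hdeg hint.submodule_iSup_eq_top
  refine ⟨fun x hx => hint.eq_zero_of_forall_mem_iSup_le fun c => ?_⟩
  obtain ⟨y, rfl⟩ := Submodule.mem_ideal_span_singleton_smul_top.1
    (by simpa [SModEq.zero, Ideal.span_singleton_pow] using hx (D - c).toNat)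
  exact (biSup_mono fun i hi => by omega : ⨆ i ≤ D - (D - c).toNat, ℱ i ≤ ⨆ i ≤ c, ℱ i)
    (X_pow_smul_mem_iSup_le hdeg _ (hD ▸ Submodule.mem_top))

end Grading

section EvaluationQuotient

variable {k M : Type*} [CommRing k] [AddCommGroup M] [Module k M] [Module k[X] M]
  [IsScalarTower k k[X] M] {a : k[X]} {r : k}

theorem smul_eq_eval_smul_of_eq_X_sub_C (ha : a = X - C r) (f : k[X])
    (q : M ⧸ Ideal.span {a} • (⊤ : Submodule k[X] M)) : f • q = f.eval r • q := by
  obtain ⟨m, rfl⟩ := Submodule.Quotient.mk_surjective _ q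
  rw [← Submodule.Quotient.mk_smul, ← Submodule.Quotient.mk_smul, Submodule.Quotient.eq,
    ← algebraMap_smul k[X] (f.eval r), algebraMap_eq, ← sub_smul]
  obtain ⟨g, hg⟩ := ha ▸ X_sub_C_dvd_sub_C_eval (a := r) (p := f)
  exact Submodule.mem_ideal_span_singleton_smul_top.2 ⟨g • m, by rw [smul_smul, ← hg]⟩

theorem restrictScalars_span_eq_span_of_eq_X_sub_C (ha : a = X - C r)
    (s : Set (M ⧸ Ideal.span {a} • (⊤ : Submodule k[X] M))) :
    (Submodule.span k[X] s).restrictScalars k = Submodule.span k s := by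
  refine le_antisymm ?_ (Submodule.span_le_restrictScalars k k[X] s)
  let N : Submodule k[X] (M ⧸ Ideal.span {a} • (⊤ : Submodule k[X] M)) :=
    { (Submodule.span k s).toAddSubmonoid with
      smul_mem' := fun f q hq => by
        rw [smul_eq_eval_smul_of_eq_X_sub_C ha]
        exact Submodule.smul_mem _ _ hq }
  exact (Submodule.span_le (p := N)).2 Submodule.subset_span

theorem finite_quotient_of_eq_X_sub_C [Module.Finite k[X] M] (ha : a = X - C r) :
    Module.Finite k (M ⧸ Ideal.span {a} • (⊤ : Submodule k[X] M)) := by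
  obtain ⟨S, hS⟩ := Module.Finite.fg_top (R := k[X])
    (M := M ⧸ Ideal.span {a} • (⊤ : Submodule k[X] M))
  refine ⟨⟨S, ?_⟩⟩
  rw [← restrictScalars_span_eq_span_of_eq_X_sub_C ha, hS, Submodule.restrictScalars_top]

end EvaluationQuotient

section EvaluationQuotientField

variable {k M : Type*} [Field k] [AddCommGroup M] [Module k M] [Module k[X] M]
  [IsScalarTower k k[X] M] {a : k[X]} {r : k}

theorem finrank_quotient_of_eq_X_sub_C_of_free [Module.Finite k[X] M] [Module.Free k[X] M]
    (ha : a = X - C r) :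
    Module.finrank k (M ⧸ Ideal.span {a} • (⊤ : Submodule k[X] M)) = Module.finrank k[X] M := by
  let b := Module.Free.chooseBasis k[X] M
  let v i : M ⧸ Ideal.span {a} • (⊤ : Submodule k[X] M) := Submodule.Quotient.mk (b i)
  have hli : LinearIndependent k v := by
    refine Fintype.linearIndependent_iff.2 fun g hg i => ?_
    have hmk : Submodule.Quotient.mk (p := Ideal.span {a} • (⊤ : Submodule k[X] M))
        (∑ j, g j • b j) = 0 := by
      rw [← Submodule.mkQ_apply, map_sum, ← hg]
      rfl
    obtain ⟨y, hy⟩ := Submodule.mem_ideal_span_singleton_smul_top.1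
      ((Submodule.Quotient.mk_eq_zero _).1 hmk)
    have hcoord := congrArg (fun x => (b.repr x i).eval r) hy
    simpa [ha, ← algebraMap_smul k[X] (g _), Finsupp.single_apply] using hcoord.symm
  have hsp : ⊤ ≤ Submodule.span k (Set.range v) := by
    rw [← restrictScalars_span_eq_span_of_eq_X_sub_C ha, Set.range_comp']
    change ⊤ ≤ (Submodule.span k[X] (Submodule.mkQ _ '' Set.range b)).restrictScalars k
    rw [Submodule.span_image, b.span_eq, Submodule.map_top, Submodule.range_mkQ,
      Submodule.restrictScalars_top]
  rw [Module.finrank_eq_card_basis (Module.Basis.mk hli hsp),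
    Module.finrank_eq_card_chooseBasisIndex]

theorem finrank_quotient_eq_iff_le_of_eq_X_sub_C [Module.Finite k[X] M] (ha : a = X - C r)
    (N : Submodule k[X] M) :
    Module.finrank k (M ⧸ Ideal.span {a} • (⊤ : Submodule k[X] M)) =
        Module.finrank k ((M ⧸ N) ⧸ Ideal.span {a} • (⊤ : Submodule k[X] (M ⧸ N))) ↔
      N ≤ Ideal.span {a} • ⊤ := by
  have := finite_quotient_of_eq_X_sub_C (M := M) ha
  have := finite_quotient_of_eq_X_sub_C (M := M ⧸ N) ha
  have hsurj := N.mkQModSpanSingleton_surjective a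
  rw [← N.mkQModSpanSingleton_injective_iff]
  refine ⟨fun h => ?_, fun hinj => ?_⟩
  · exact (LinearMap.injective_iff_surjective_of_finrank_eq_finrank h
      (f := (N.mkQModSpanSingleton a).restrictScalars k)).2 hsurj
  · exact (LinearEquiv.ofBijective ((N.mkQModSpanSingleton a).restrictScalars k)
      ⟨hinj, hsurj⟩).finrank_eq

end EvaluationQuotientField

theorem Module.finrank_eq_of_bijective_semilinear {R R' V W : Type*} [Semiring R] [Semiring R']
    [AddCommMonoid V] [Module R V] [AddCommMonoid W] [Module R' W] {σ : R →+* R'}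
    (hσ : Function.Bijective σ) (f : V →ₛₗ[σ] W) (hf : Function.Bijective f) :
    Module.finrank R V = Module.finrank R' W := by
  unfold Module.finrank
  simpa using congrArg Cardinal.toNat
    (lift_rank_eq_of_equiv_equiv σ (AddEquiv.ofBijective f hf) hσ f.map_smulₛₗ)

theorem stmt_14_general (p : ℕ) (k : Type*) [Field k] [PerfectRing k p]
    (M : Type*) [AddCommGroup M] [Module k M] [Module (Polynomial k) M]
    [IsScalarTower k (Polynomial k) M] [Module.Finite (Polynomial k) M]
    (ℱ : ℤ → Submodule k M) (hint : DirectSum.IsInternal ℱ)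
    (hdeg : ∀ i : ℤ, ∀ x ∈ ℱ i, (Polynomial.X : Polynomial k) • x ∈ ℱ (i - 1))
    (σk : k →+* k) (hσk : ∀ c : k, σk c = c ^ p)
    (φ : (M ⧸ (Ideal.span {(Polynomial.X : Polynomial k)} •
            (⊤ : Submodule (Polynomial k) M))) →ₛₗ[σk]
        (M ⧸ (Ideal.span {(Polynomial.X : Polynomial k) - 1} •
            (⊤ : Submodule (Polynomial k) M))))
    (hφ : Function.Bijective φ) :
    Module.Free (Polynomial k) M := by
  have := hint.isHausdorff_span_X hdeg
  have hX₀ : (X : k[X]) = X - C 0 := by simp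
  have hX₁ : (X : k[X]) - 1 = X - C 1 := by simp
  have hσ : Function.Bijective σk := by
    simpa only [funext hσk] using PerfectRing.bijective_frobenius (R := k) (p := p)
  set T := Submodule.torsion k[X] M
  have hT₁ : T ≤ Ideal.span {(X - 1 : k[X])} • ⊤ :=
    Submodule.torsion_le_ideal_span_singleton_smul_top_of_isCoprime irreducible_X
      (by simpa using isCoprime_X_sub_C_of_isUnit_sub (a := (0 : k)) (b := 1) (by simp))
  have hT₀ : T ≤ Ideal.span {(X : k[X])} • ⊤ := by
    rw [← finrank_quotient_eq_iff_le_of_eq_X_sub_C hX₀]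
    calc _ = Module.finrank k (M ⧸ Ideal.span {(X : k[X]) - 1} • (⊤ : Submodule k[X] M)) :=
          Module.finrank_eq_of_bijective_semilinear hσ φ hφ
      _ = Module.finrank k[X] (M ⧸ T) :=
          ((finrank_quotient_eq_iff_le_of_eq_X_sub_C hX₁ T).2 hT₁).trans
            (finrank_quotient_of_eq_X_sub_C_of_free hX₁)
      _ = _ := (finrank_quotient_of_eq_X_sub_C_of_free hX₀).symm
  have : Module.IsTorsionFree k[X] M := Submodule.isTorsionFree_iff_torsion_eq_bot.2
    (Submodule.torsion_eq_bot_of_le_ideal_span_singleton_smul_top X_ne_zero hT₀)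
  exact Module.free_of_finite_type_torsion_free'

/-- Let `k` be a perfect field of characteristic `p` and `M` a
finitely generated ℤ-graded `k[v]`-module admitting a Frobenius-semilinear bijection
`φ : M/vM → M/(v−1)M`. Then `M` is a free `k[v]`-module. -/
theorem stmt_14 (p : ℕ) [Fact p.Prime] (k : Type*) [Field k] [CharP k p] [PerfectRing k p]
    (M : Type*) [AddCommGroup M] [Module k M] [Module (Polynomial k) M]
    [IsScalarTower k (Polynomial k) M] [Module.Finite (Polynomial k) M]
    (ℱ : ℤ → Submodule k M) (hint : DirectSum.IsInternal ℱ)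
    (hdeg : ∀ i : ℤ, ∀ x ∈ ℱ i, (Polynomial.X : Polynomial k) • x ∈ ℱ (i - 1))
    (σk : k →+* k) (hσk : ∀ c : k, σk c = c ^ p)
    (φ : (M ⧸ (Ideal.span {(Polynomial.X : Polynomial k)} •
            (⊤ : Submodule (Polynomial k) M))) →ₛₗ[σk]
        (M ⧸ (Ideal.span {(Polynomial.X : Polynomial k) - 1} •
            (⊤ : Submodule (Polynomial k) M))))
    (hφ : Function.Bijective φ) :
    Module.Free (Polynomial k) M :=
  stmt_14_general p k M ℱ hint hdeg σk hσk φ hφ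
end

section
/- Let R be a commutative Noetherian ring, let t ∈ R be an element such that R is (t)-adically complete, and let M be a finitely generated R-module on which multiplication by t is injective. Then M is a projective R-module if and only if M/tM is a projective R/tR-module. -/
/-!
Write `M = F / K` with `F` finite free. Over `R/t` the surjection `F/tF → M/tM` splits, which
gives a retraction of `F/tF` onto the image of `K`; by projectivity of `F` it lifts to a map
`s : F → K` that is the identity on `K` modulo `K ∩ tF`, and `K ∩ tF = tK` because `M` has no
`t`-torsion. As `t` lies in the Jacobson radical and `K` is finite, Nakayama makes `s|_K`
surjective, hence an automorphism of `K`; so `K` is a direct summand of `F` and `M` is projective.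
-/

section

open Function Submodule LinearMap

variable {R : Type*} [CommRing R] {F M : Type*} [AddCommGroup F] [Module R F]
  [AddCommGroup M] [Module R M]

theorem Submodule.exists_retraction_of_sub_mem_smul_top {I : Ideal R}
    (hI : I ≤ (⊥ : Ideal R).jacobson) {K : Submodule R F} [Module.Finite R K] (s : F →ₗ[R] K)
    (hs : ∀ k : K, s k - k ∈ I • (⊤ : Submodule R K)) :
    ∃ r : F →ₗ[R] K, r ∘ₗ K.subtype = LinearMap.id := by
  set φ := s ∘ₗ K.subtype
  have hφ : Surjective φ := by
    rw [← range_eq_top, eq_top_iff]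
    refine le_of_le_smul_of_le_jacobson_bot Module.Finite.fg_top hI fun k _ => ?_
    rw [show k = φ k - (s k - k) by simp [φ]]
    exact sub_mem (mem_sup_left (mem_range_self φ k)) (mem_sup_right (hs k))
  let ψ := LinearEquiv.ofBijective φ (OrzechProperty.bijective_of_surjective_endomorphism φ hφ)
  exact ⟨ψ.symm ∘ₗ s, LinearMap.ext ψ.symm_apply_apply⟩

theorem Module.Projective.quotient_smul_top [Module.Projective R M] (I : Ideal R) :
    Module.Projective (R ⧸ I) (M ⧸ (I • ⊤ : Submodule R M)) :=
  .of_equiv ((TensorProduct.quotTensorEquivQuotSMul M I).extendScalarsOfSurjective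
    Ideal.Quotient.mk_surjective)

theorem Module.Projective.quotient_of_retraction [Module.Projective R F] {K : Submodule R F}
    (r : F →ₗ[R] K) (hr : r ∘ₗ K.subtype = LinearMap.id) : Module.Projective R (F ⧸ K) := by
  have hK : K ≤ ker (LinearMap.id - K.subtype ∘ₗ r) := fun k hk => by
    simpa [sub_eq_zero] using congr_arg Subtype.val (LinearMap.congr_fun hr ⟨k, hk⟩).symm
  refine .of_split (K.liftQ _ hK) K.mkQ (LinearMap.ext fun x => ?_)
  induction x using Submodule.Quotient.induction_on with
  | H x => simp

theorem LinearMap.mem_map_ker_of_reduceModIdeal_eq_zero {I : Ideal R} {f : F →ₗ[R] M}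
    (hf : Surjective f) {y : F ⧸ (I • ⊤ : Submodule R F)} (hy : f.reduceModIdeal I y = 0) :
    y ∈ (ker f).map (I • ⊤ : Submodule R F).mkQ := by
  induction y using Submodule.Quotient.induction_on with
  | H x =>
  have hx : x ∈ (I • ⊤ : Submodule R M).comap f := by
    simpa [Submodule.Quotient.mk_eq_zero] using hy
  rw [comap_smul_top_of_surjective I f hf] at hx
  obtain ⟨a, ha, k, hk, rfl⟩ := mem_sup.mp hx
  exact ⟨k, hk, by simp [(Submodule.Quotient.mk_eq_zero _).mpr ha]⟩

theorem LinearMap.exists_ker_sub_mem_smul_top [Module.Projective R F] (I : Ideal R)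
    {f : F →ₗ[R] M} (hf : Surjective f)
    [Module.Projective (R ⧸ I) (M ⧸ (I • ⊤ : Submodule R M))] :
    ∃ s : F →ₗ[R] ker f, ∀ k : ker f, (s k : F) - k ∈ (I • ⊤ : Submodule R F) := by
  set π := (I • ⊤ : Submodule R F).mkQ
  have hsurj : Surjective (f.reduceModIdeal I) := by
    intro y
    induction y using Submodule.Quotient.induction_on with
    | H m => obtain ⟨x, rfl⟩ := hf m; exact ⟨π x, rfl⟩
  obtain ⟨σ, hσ⟩ := Module.projective_lifting_property _ LinearMap.id hsurj
  set fb := (f.reduceModIdeal I).restrictScalars R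
  have hσ' (z : M ⧸ (I • ⊤ : Submodule R M)) : f.reduceModIdeal I (σ z) = z :=
    LinearMap.congr_fun hσ z
  have hρ (x : F) : π x - σ (fb (π x)) ∈ (ker f).map π :=
    mem_map_ker_of_reduceModIdeal_eq_zero hf (by rw [map_sub, hσ']; exact sub_self _)
  obtain ⟨s, hs⟩ := Module.projective_lifting_property (π.submoduleMap (ker f))
    ((π - σ.restrictScalars R ∘ₗ fb ∘ₗ π).codRestrict _ hρ) (π.submoduleMap_surjective _)
  refine ⟨s, fun k => ?_⟩
  have hk : π (s k) = π k - σ (fb (π k)) := congr_arg Subtype.val (LinearMap.congr_fun hs k)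
  have hfk : fb (π k) = 0 := by simp [fb, π, mem_ker.mp k.2]
  rw [hfk, map_zero, sub_zero] at hk
  rwa [← Submodule.Quotient.mk_eq_zero, Submodule.Quotient.mk_sub, sub_eq_zero]

theorem LinearMap.mem_span_singleton_smul_top_ker {t : R} {f : F →ₗ[R] M}
    (hinj : Injective fun x : M => t • x) {k : ker f}
    (hk : (k : F) ∈ (Ideal.span {t} • ⊤ : Submodule R F)) :
    k ∈ (Ideal.span {t} • ⊤ : Submodule R (ker f)) := by
  rw [ideal_span_singleton_smul] at hk ⊢
  obtain ⟨y, -, hy : t • y = k⟩ := hk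
  have hyk : y ∈ ker f := hinj <| show t • f y = t • 0 by rw [← map_smul, hy, smul_zero]; exact k.2
  exact ⟨⟨y, hyk⟩, mem_top, Subtype.ext hy⟩

theorem Module.Projective.of_surjective_of_projective_quotient_smul_top [Module.Projective R F]
    {I : Ideal R} (hI : I ≤ (⊥ : Ideal R).jacobson) {f : F →ₗ[R] M} (hf : Surjective f)
    [Module.Finite R (ker f)]
    (hK : ∀ k : ker f, (k : F) ∈ (I • ⊤ : Submodule R F) → k ∈ (I • ⊤ : Submodule R (ker f)))
    [Module.Projective (R ⧸ I) (M ⧸ (I • ⊤ : Submodule R M))] : Module.Projective R M := by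
  obtain ⟨s, hs⟩ := f.exists_ker_sub_mem_smul_top I hf
  obtain ⟨r, hr⟩ := exists_retraction_of_sub_mem_smul_top hI s fun k => hK _ (by simpa using hs k)
  have := Module.Projective.quotient_of_retraction r hr
  exact .of_equiv (f.quotKerEquivOfSurjective hf)

end

/-- Let `R` be a commutative Noetherian ring, `t ∈ R` such that `R` is
`(t)`-adically complete, and `M` a finitely generated `R`-module on which multiplication
by `t` is injective. Then `M` is projective over `R` iff `M/tM` is projective over `R/tR`. -/
theorem stmt_17 (R : Type*) [CommRing R] [IsNoetherianRing R] (t : R)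
    [IsAdicComplete (Ideal.span {t}) R]
    (M : Type*) [AddCommGroup M] [Module R M] [Module.Finite R M]
    (hinj : Function.Injective fun x : M => t • x) :
    Module.Projective R M ↔
      Module.Projective (R ⧸ Ideal.span {t})
        (M ⧸ (Ideal.span {t} • (⊤ : Submodule R M))) := by
  refine ⟨fun _ => .quotient_smul_top _, fun _ => ?_⟩
  obtain ⟨n, f, hf⟩ := Module.Finite.exists_fin' R M
  exact .of_surjective_of_projective_quotient_smul_top (IsAdicComplete.le_jacobson_bot _) hf
    fun _ => f.mem_span_singleton_smul_top_ker hinj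
end

section
/- Let p be a prime and R a commutative ring in which p is nilpotent. Let a ∈ R, let w ∈ W(R) be a p-typical Witt vector with F(w) = 0, where F denotes the Witt-vector Frobenius, and suppose ν ∈ W(R) satisfies V(ν) = p·1 − [a]·w in W(R), where V is the Verschiebung and [a] the Teichmüller representative of a. Then ν is a unit in W(R). -/
/-!
Modulo the nilradical `N`, the ring `R/N` is reduced of characteristic `p`, so the Witt vector
Frobenius is injective there and `V 1 = p`. Hence `w ↦ 0` and `V ν ↦ p = V 1`, so `ν ↦ 1` in
`W(R/N)` by injectivity of `V`. Thus `ν = 1 + x` where all coefficients of `x` are nilpotent;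
then every truncation of `x` is nilpotent, so every truncation of `ν` is a unit, and `W(R)` is the
inverse limit of its truncations.
-/

open Function

namespace WittVector

variable {p : ℕ} [Fact p.Prime] {R : Type*} [CommRing R]

local notation "𝕎" => WittVector p

instance [Subsingleton R] : Subsingleton (𝕎 R) :=
  ⟨fun _ _ => ext fun _ => Subsingleton.elim _ _⟩

theorem iterate_frobenius_iterate_verschiebung (y : 𝕎 R) (n : ℕ) :
    frobenius^[n] (verschiebung^[n] y) = y * (p : 𝕎 R) ^ n := by
  induction n generalizing y with
  | zero => simp
  | succ n ih =>
    rw [iterate_succ_apply' (f := frobenius), iterate_succ_apply (f := verschiebung), ih,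
      map_mul, map_pow, map_natCast, frobenius_verschiebung]
    ring

theorem iterate_verschiebung_pow_succ (y : 𝕎 R) (n k : ℕ) :
    (verschiebung^[n] y) ^ (k + 1) = verschiebung^[n] (y ^ (k + 1) * (p : 𝕎 R) ^ (n * k)) := by
  induction k with
  | zero => simp
  | succ k ih =>
    rw [pow_succ, ih, iterate_verschiebung_mul_left, iterate_frobenius_iterate_verschiebung]
    ring_nf

theorem pow_succ_mem_ker_truncate_succ {y : 𝕎 R} {n k : ℕ}
    (hy : y ∈ RingHom.ker (truncate (p := p) n)) (hk : y.coeff n ^ k = 0) :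
    y ^ (k + 1) ∈ RingHom.ker (truncate (p := p) (n + 1)) := by
  rw [mem_ker_truncate] at hy ⊢
  intro i hi
  rw [eq_iterate_verschiebung hy, iterate_verschiebung_pow_succ]
  rcases Nat.lt_succ_iff_lt_or_eq.mp hi with hi | rfl
  · exact iterate_verschiebung_coeff_eq_zero _ hi
  · have hcoeff := iterate_verschiebung_coeff (y.shift i ^ (k + 1) * (p : 𝕎 R) ^ (i * k)) i 0
    rw [zero_add] at hcoeff
    rw [hcoeff, ← constantCoeff_apply, map_mul, map_pow, map_pow, constantCoeff_apply,
      shift_coeff, add_zero, pow_succ, hk, zero_mul, zero_mul]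

theorem isNilpotent_coeff_of_mem_ker_map {x : 𝕎 R}
    (hx : x ∈ RingHom.ker (map (Ideal.Quotient.mk (nilradical R)))) (i : ℕ) :
    IsNilpotent (x.coeff i) := by
  rw [← mem_nilradical, ← Ideal.Quotient.eq_zero_iff_mem, ← map_coeff, RingHom.mem_ker.mp hx,
    zero_coeff]

theorem isNilpotent_truncate_of_mem_ker_map {x : 𝕎 R}
    (hx : x ∈ RingHom.ker (map (Ideal.Quotient.mk (nilradical R)))) (n : ℕ) :
    IsNilpotent (truncate (p := p) n x) := by
  suffices ∃ N, x ^ N ∈ RingHom.ker (truncate (p := p) n) by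
    obtain ⟨N, hN⟩ := this
    exact ⟨N, by rw [← map_pow, ← RingHom.mem_ker]; exact hN⟩
  induction n with
  | zero => exact ⟨0, (mem_ker_truncate _ _).2 fun i hi => (Nat.not_lt_zero i hi).elim⟩
  | succ n ih =>
    obtain ⟨N, hN⟩ := ih
    obtain ⟨k, hk⟩ :=
      isNilpotent_coeff_of_mem_ker_map (Ideal.pow_mem_of_mem _ hx _ N.succ_pos) n
    have hN' : x ^ (N + 1) ∈ RingHom.ker (truncate (p := p) n) := by
      rw [pow_succ]
      exact Ideal.mul_mem_right x _ hN
    refine ⟨(N + 1) * (k + 1), ?_⟩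
    rw [pow_mul]
    exact pow_succ_mem_ker_truncate_succ hN' hk

theorem isUnit_of_forall_isUnit_truncate {x : 𝕎 R} (h : ∀ n, IsUnit (truncate (p := p) n x)) :
    IsUnit x := by
  -- The lifts of `truncate n` to `W(R)[1/x]` glue to a retraction of `W(R) → W(R)[1/x]`.
  let f : ∀ n, Localization.Away x →+* TruncatedWittVector p n R :=
    fun n => IsLocalization.Away.lift x (h n)
  have f_compat :
      ∀ (k n : ℕ) (hkn : k ≤ n), (TruncatedWittVector.truncate hkn).comp (f n) = f k :=
    fun k n hkn => IsLocalization.ringHom_ext (Submonoid.powers x) <| by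
      rw [RingHom.comp_assoc, IsLocalization.Away.lift_comp, IsLocalization.Away.lift_comp,
        TruncatedWittVector.truncate_comp_wittVector_truncate]
  have hlift : (lift f f_compat).comp (algebraMap (𝕎 R) (Localization.Away x)) = RingHom.id _ :=
    hom_ext _ _ fun k => by
      rw [← RingHom.comp_assoc, truncate_comp_lift, IsLocalization.Away.lift_comp,
        RingHom.comp_id]
  have hx := (IsLocalization.Away.algebraMap_isUnit x).map (lift f f_compat)
  rwa [← RingHom.comp_apply, hlift, RingHom.id_apply] at hx

theorem isUnit_one_add_of_mem_ker_map {x : 𝕎 R}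
    (hx : x ∈ RingHom.ker (map (Ideal.Quotient.mk (nilradical R)))) : IsUnit (1 + x) :=
  isUnit_of_forall_isUnit_truncate fun n => by
    rw [map_add, map_one]
    exact (isNilpotent_truncate_of_mem_ker_map hx n).isUnit_one_add

section CharP

variable {S : Type*} [CommRing S] [CharP S p]

theorem frobenius_injective [IsReduced S] : Injective (frobenius : 𝕎 S → 𝕎 S) :=
  fun x y hxy => ext fun n => frobenius_inj S p <| by
    simpa only [coeff_frobenius_charP, frobenius_def] using congr_arg (coeff · n) hxy

theorem verschiebung_one : verschiebung (1 : 𝕎 S) = p := by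
  simpa using verschiebung_frobenius (1 : 𝕎 S)

end CharP

end WittVector

theorem charP_quotient_nilradical (p : ℕ) [Fact p.Prime] {R : Type*} [CommRing R] [Nontrivial R]
    (hp : IsNilpotent (p : R)) : CharP (R ⧸ nilradical R) p :=
  have : Nontrivial (R ⧸ nilradical R) := Ideal.Quotient.nontrivial_iff.mpr <|
    (Ideal.ne_top_iff_one _).mpr fun h => not_isNilpotent_one (mem_nilradical.mp h)
  (CharP.charP_iff_prime_eq_zero Fact.out).mpr <| by
    rw [← map_natCast (Ideal.Quotient.mk _), Ideal.Quotient.eq_zero_iff_mem]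
    exact mem_nilradical.mpr hp

/-- Let `p` be a prime and `R` a commutative ring in which `p` is
nilpotent. Let `a ∈ R`, let `w ∈ W(R)` be a `p`-typical Witt vector with `F(w) = 0`,
and suppose `ν ∈ W(R)` satisfies `V(ν) = p·1 − [a]·w`. Then `ν` is a unit in `W(R)`. -/
theorem stmt_18 (p : ℕ) [Fact p.Prime] (R : Type*) [CommRing R]
    (hnil : IsNilpotent (p : R)) (a : R) (w : WittVector p R)
    (hw : WittVector.frobenius w = 0) (ν : WittVector p R)
    (hν : WittVector.verschiebung ν =
      (p : WittVector p R) * 1 - WittVector.teichmuller p a * w) :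
    IsUnit ν := by
  nontriviality R
  let π := Ideal.Quotient.mk (nilradical R)
  have := charP_quotient_nilradical p hnil
  have : IsReduced (R ⧸ nilradical R) :=
    (Ideal.isRadical_iff_quotient_reduced _).mp (Ideal.radical_isRadical 0)
  have hw' : WittVector.map π w = 0 := WittVector.frobenius_injective <| by
    rw [← (WittVector.frobenius_isPoly p).map, hw, map_zero, map_zero]
  have hν' : WittVector.map π ν = 1 := WittVector.verschiebung_injective p _ <| by
    rw [← WittVector.map_verschiebung, hν, map_sub, map_mul, map_mul,
      WittVector.map_teichmuller, hw', map_one, map_natCast, mul_zero, sub_zero, mul_one,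
      WittVector.verschiebung_one]
  have hker : ν - 1 ∈ RingHom.ker (WittVector.map π) := by
    rw [RingHom.mem_ker, map_sub, hν', map_one, sub_self]
  simpa only [add_sub_cancel] using WittVector.isUnit_one_add_of_mem_ker_map hker
end
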